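/- Let m = τ₁…τ₂ₙ be an orderly return for a state P in a medium. If for every 1 ≤ i ≤ n the tokens τᵢ and τᵢ₊ₙ are mutual reverses, then m is regular, i.e., for each 1 ≤ i ≤ n the message τᵢτᵢ₊₁…τᵢ₊ₙ₋₁ is concise for the state Pτ₁⋯τᵢ₋₁. -/

import Mathlib

variable {S : Type*}

/-- Result of applying message `m` (a list of tokens) to state `P`. -/
def mApply (m : List (S → S)) (P : S) : S := m.foldl (fun s τ => τ s) P

/-- `τ'` is a reverse of `τ`. -/
def IsReverse (τ τ' : S → S) : Prop := ∀ P Q : S, P ≠ Q → (τ P = Q ↔ τ' Q = P)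

/-- `(S, T)` is a token system. -/
def IsTokenSystem (T : Set (S → S)) : Prop :=
  Nontrivial S ∧ T.Nonempty ∧ ∀ τ ∈ T, τ ≠ id

/-- `m` is a message of the token system with token set `T`. -/
def IsMsg (T : Set (S → S)) (m : List (S → S)) : Prop := ∀ τ ∈ m, τ ∈ T

/-- `m` is stepwise effective for `P`. -/
def StepwiseEff : List (S → S) → S → Prop
  | [], _ => True
  | τ :: rest, P => τ P ≠ P ∧ StepwiseEff rest (τ P)

/-- `m` is consistent: it contains no token together with a reverse of it. -/
def Consistent (m : List (S → S)) : Prop :=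
  ∀ τ ∈ m, ∀ τ' ∈ m, ¬ IsReverse τ τ'

/-- `m` is concise for `P`. -/
def Concise (T : Set (S → S)) (m : List (S → S)) (P : S) : Prop :=
  IsMsg T m ∧ Consistent m ∧ StepwiseEff m P ∧ m.Nodup

/-- `m` is a return message for `P`. -/
def IsReturn (m : List (S → S)) (P : S) : Prop :=
  StepwiseEff m P ∧ mApply m P = P

/-- `m` is vacuous: its indices partition into pairs of mutually reverse tokens. -/
def Vacuous (m : List (S → S)) : Prop :=
  ∃ σ : Equiv.Perm (Fin m.length),
    (∀ i, σ i ≠ i) ∧ (∀ i, σ (σ i) = i) ∧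
    ∀ i, IsReverse (m.get i) (m.get (σ i))

/-- `(S, T)` is a medium: token system satisfying [Ma] and [Mb]. -/
def IsMedium (T : Set (S → S)) : Prop :=
  IsTokenSystem T ∧
  (∀ P Q : S, P ≠ Q → ∃ m, Concise T m P ∧ mApply m P = Q) ∧
  (∀ (m : List (S → S)) (P : S), IsMsg T m → IsReturn m P → Vacuous m)

/-- Content of a message: its set of tokens. -/
def msgContent (m : List (S → S)) : Set (S → S) := {τ | τ ∈ m}

/-- Token content of a state `P`. -/
def SContent (T : Set (S → S)) (P : S) : Set (S → S) :=
  {τ | ∃ (V : S) (m : List (S → S)), Concise T m V ∧ mApply m V = P ∧ τ ∈ m}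

/-- `mr` is the reverse message `τ̃ₙ…τ̃₁` of `m = τ₁…τₙ`. -/
def IsReverseOfMsg (m mr : List (S → S)) : Prop :=
  List.Forall₂ (fun τ τ' => IsReverse τ τ' ∧ IsReverse τ' τ) m mr.reverse

/-- An orderly return for `P`: a message `q · ñ` where `q`, `nn` are concise
messages producing the same state `V ≠ P` from `P`, and `ñ` reverses `nn`. -/
def OrderlyReturn (T : Set (S → S)) (m : List (S → S)) (P : S) : Prop :=
  ∃ q nn nr : List (S → S), Concise T q P ∧ Concise T nn P ∧
    mApply q P = mApply nn P ∧ mApply q P ≠ P ∧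
    IsReverseOfMsg nn nr ∧ m = q ++ nr

/-!
Let `m = q · ñ` with `q` and `n` concise from `P` to `V`. Axiom [Ma] gives a concise `r` from `V`
back to `P`; by [Mb] the returns `q · r` and `r · q` are vacuous, and since a consistent message
cannot pair its tokens among themselves, every token of `q` has its reverse in `r` and vice versa.
Hence `|q| = |r| = |n|`, and every reverse of a token of `q` is a token of the medium. Under the
hypothesis on opposite tokens, `ñ` is the tokenwise reverse of `q`, so the segment `τᵢ…τᵢ₊ₙ₋₁` is
`τᵢ…τₙ` followed by the reverses of `τ₁…τᵢ₋₁`. It is stepwise effective because `ñ` undoes `n`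
step by step, and it cannot contain a token twice or together with its reverse, because `q` is
consistent and without repetitions.
-/

theorem List.Forall₂.exists_mem_left {α β : Type*} {R : α → β → Prop} {l₁ : List α}
    {l₂ : List β} (h : List.Forall₂ R l₁ l₂) {b : β} (hb : b ∈ l₂) : ∃ a ∈ l₁, R a b := by
  induction h with
  | nil => simp at hb
  | cons hab _ ih =>
    rcases List.mem_cons.mp hb with rfl | hb
    · exact ⟨_, List.mem_cons_self, hab⟩
    · obtain ⟨a, ha, hR⟩ := ih hb
      exact ⟨a, List.mem_cons_of_mem _ ha, hR⟩

theorem List.forall₂_of_getElem_append_add {α : Type*} {R : α → α → Prop} {l₁ l₂ : List α}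
    {n : ℕ} (h₁ : l₁.length = n) (h₂ : l₂.length = n)
    (h : ∀ i (hi : i < n),
      R ((l₁ ++ l₂)[i]'(by rw [List.length_append]; omega)) ((l₁ ++ l₂)[i + n]'(by rw [List.length_append]; omega))) :
    List.Forall₂ R l₁ l₂ := by
  refine List.forall₂_iff_get.mpr ⟨h₁.trans h₂.symm, fun i hi₁ _ => ?_⟩
  have hi := h i (h₁ ▸ hi₁)
  rw [List.getElem_append_left hi₁, List.getElem_append_right (by omega)] at hi
  simpa only [List.get_eq_getElem, h₁, Nat.add_sub_cancel] using hi

theorem List.take_drop_append_of_le_length {α : Type*} {l₁ : List α} (l₂ : List α) {i : ℕ}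
    (hi : i ≤ l₁.length) : ((l₁ ++ l₂).drop i).take l₁.length = l₁.drop i ++ l₂.take i := by
  rw [List.drop_append_of_le_length hi, List.take_append,
    List.take_of_length_le (by rw [List.length_drop]; omega), List.length_drop,
    Nat.sub_sub_self hi]

lemma mApply_append (a b : List (S → S)) (P : S) :
    mApply (a ++ b) P = mApply b (mApply a P) := List.foldl_append

lemma stepwiseEff_append {a b : List (S → S)} {P : S} :
    StepwiseEff (a ++ b) P ↔ StepwiseEff a P ∧ StepwiseEff b (mApply a P) := by
  induction a generalizing P with
  | nil => simp [StepwiseEff, mApply]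
  | cons τ a ih => simp only [List.cons_append, StepwiseEff, ih, and_assoc]; rfl

lemma IsReverse.symm {τ τ' : S → S} (h : IsReverse τ τ') : IsReverse τ' τ :=
  fun P Q hPQ => (h Q P hPQ.symm).symm

lemma IsReverse.rightUnique : Relator.RightUnique (IsReverse (S := S)) := by
  intro τ τ₁ τ₂ h₁ h₂
  funext Q
  by_cases hQ : τ₂ Q = Q
  · by_contra hne
    rw [hQ] at hne
    have hτ : τ (τ₁ Q) = Q := (h₁ _ _ hne).mpr rfl
    exact hne (((h₂ _ _ hne).mp hτ).symm.trans hQ)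
  · exact (h₁ _ _ hQ).mp ((h₂ _ _ hQ).mpr rfl)

lemma IsReverse.biUnique : Relator.BiUnique (IsReverse (S := S)) :=
  ⟨fun _ _ _ h₁ h₂ => IsReverse.rightUnique h₁.symm h₂.symm, IsReverse.rightUnique⟩

lemma length_le_of_forall_exists_isReverse {a b : List (S → S)} (ha : a.Nodup)
    (h : ∀ τ ∈ a, ∃ τ' ∈ b, IsReverse τ τ') : a.length ≤ b.length := by
  classical
  calc a.length = a.toFinset.card := (List.toFinset_card_of_nodup ha).symm
    _ ≤ b.toFinset.card :=
      Finset.card_le_card_of_forall_subsingleton IsReverse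
        (fun τ hτ => by simpa using h τ (List.mem_toFinset.mp hτ))
        (fun _ _ _ hτ₁ _ hτ₂ => IsReverse.biUnique.1 hτ₁.2 hτ₂.2)
    _ ≤ b.length := List.toFinset_card_le b

lemma isReturn_append_reverse {nn l : List (S → S)} (hl : List.Forall₂ IsReverse nn l) {P : S}
    (hnn : StepwiseEff nn P) : IsReturn (nn ++ l.reverse) P := by
  induction hl generalizing P with
  | nil => simp [IsReturn, StepwiseEff, mApply]
  | @cons τ τ' nn l hττ' _ ih =>
    obtain ⟨hτ, hnn⟩ := hnn
    obtain ⟨hSE, hret⟩ := ih hnn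
    have hback : τ' (τ P) = P := (hττ' _ _ (Ne.symm hτ)).mp rfl
    have hlast : StepwiseEff [τ'] (mApply (nn ++ l.reverse) (τ P)) := by
      rw [hret]
      exact ⟨by rw [hback]; exact Ne.symm hτ, trivial⟩
    rw [List.reverse_cons, ← List.append_assoc]
    refine ⟨⟨hτ, stepwiseEff_append.mpr ⟨hSE, hlast⟩⟩, ?_⟩
    change mApply (nn ++ l.reverse ++ [τ']) (τ P) = P
    rw [mApply_append, hret]
    exact hback

lemma stepwiseEff_take_drop {l : List (S → S)} {P : S} (h : StepwiseEff l P) (i : ℕ) :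
    StepwiseEff (l.take i) P ∧ StepwiseEff (l.drop i) (mApply (l.take i) P) := by
  rwa [← stepwiseEff_append, List.take_append_drop]

section Medium

variable {T : Set (S → S)}

lemma IsMedium.exists_isReverse_mem (hM : IsMedium T) {a b : List (S → S)} {P : S}
    (hmsg : IsMsg T (a ++ b)) (hret : IsReturn (a ++ b) P) (ha : Consistent a) :
    ∀ τ ∈ a, ∃ τ' ∈ b, IsReverse τ τ' := by
  obtain ⟨σ, -, -, hσ⟩ := hM.2.2 _ P hmsg hret
  intro τ hτ
  obtain ⟨k, rfl⟩ := List.mem_iff_get.mp (List.mem_append_left b hτ)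
  rcases List.mem_append.mp (List.get_mem (a ++ b) (σ k)) with h | h
  · exact (ha _ hτ _ h (hσ k)).elim
  · exact ⟨_, h, hσ k⟩

lemma IsMedium.length_eq_of_concise (hM : IsMedium T) {q r : List (S → S)} {P : S}
    (hq : Concise T q P) (hr : Concise T r (mApply q P)) (hqr : mApply r (mApply q P) = P) :
    q.length = r.length ∧ ∀ τ ∈ q, ∃ τ' ∈ r, IsReverse τ τ' := by
  have hmsg : ∀ {a b}, IsMsg T a → IsMsg T b → IsMsg T (a ++ b) := fun ha hb τ hτ =>
    (List.mem_append.mp hτ).elim (ha τ) (hb τ)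
  have hret_qr : IsReturn (q ++ r) P :=
    ⟨stepwiseEff_append.mpr ⟨hq.2.2.1, hr.2.2.1⟩, by rw [mApply_append, hqr]⟩
  have hret_rq : IsReturn (r ++ q) (mApply q P) :=
    ⟨stepwiseEff_append.mpr ⟨hr.2.2.1, by rw [hqr]; exact hq.2.2.1⟩, by rw [mApply_append, hqr]⟩
  have hq_rev := hM.exists_isReverse_mem (hmsg hq.1 hr.1) hret_qr hq.2.1
  have hr_rev := hM.exists_isReverse_mem (hmsg hr.1 hq.1) hret_rq hr.2.1
  exact ⟨(length_le_of_forall_exists_isReverse hq.2.2.2 hq_rev).antisymm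
    (length_le_of_forall_exists_isReverse hr.2.2.2 hr_rev), hq_rev⟩

lemma IsMedium.exists_of_orderlyReturn (hM : IsMedium T) {m : List (S → S)} {P : S}
    (hor : OrderlyReturn T m P) :
    ∃ q nr, m = q ++ nr ∧ Concise T q P ∧ (∀ τ ∈ q, ∀ τ', IsReverse τ τ' → τ' ∈ T) ∧
      StepwiseEff nr (mApply q P) ∧ nr.length = q.length := by
  obtain ⟨q, nn, nr, hq, hnn, hV, hVP, hrev, rfl⟩ := hor
  obtain ⟨r, hr, hrP⟩ := hM.2.1 _ P hVP
  obtain ⟨hqr, hq_rev⟩ := hM.length_eq_of_concise hq hr hrP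
  obtain ⟨hnnr, -⟩ := hM.length_eq_of_concise hnn (hV ▸ hr) (hV ▸ hrP)
  have hnr_SE := (isReturn_append_reverse (hrev.imp fun _ _ h => h.1) hnn.2.2.1).1
  rw [List.reverse_reverse, stepwiseEff_append, ← hV] at hnr_SE
  refine ⟨q, nr, rfl, hq, fun τ hτ τ' hττ' => ?_, hnr_SE.2, ?_⟩
  · obtain ⟨ρ, hρ, hτρ⟩ := hq_rev τ hτ
    exact IsReverse.rightUnique hτρ hττ' ▸ hr.1 ρ hρ
  · rw [← List.length_reverse, ← hrev.length_eq]
    omega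

lemma Concise.drop_append_take {q p : List (S → S)} {P : S} (hq : Concise T q P)
    (hpT : IsMsg T p) (hp : StepwiseEff p (mApply q P)) (hqp : List.Forall₂ IsReverse q p)
    (i : ℕ) : Concise T (q.drop i ++ p.take i) (mApply (q.take i) P) := by
  obtain ⟨hqT, hqc, hqSE, hqnd⟩ := hq
  have hcb : List.Forall₂ IsReverse (q.take i) (p.take i) := List.forall₂_take i hqp
  have hmem : ∀ {τ σ}, τ ∈ p.take i → IsReverse τ σ → σ ∈ q.take i := fun hτ hσ =>
    (List.rel_mem IsReverse.biUnique hσ.symm hcb).mpr hτ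
  have hdisj : ∀ {τ}, τ ∈ q.take i → τ ∉ q.drop i := by
    rw [← List.take_append_drop i q, List.nodup_append] at hqnd
    exact fun h₁ h₂ => hqnd.2.2 _ h₁ _ h₂ rfl
  refine ⟨?_, ?_, ?_, ?_⟩
  · intro τ hτ
    rcases List.mem_append.mp hτ with h | h
    · exact hqT τ (List.mem_of_mem_drop h)
    · exact hpT τ (List.mem_of_mem_take h)
  · intro τ hτ τ' hτ' hrev
    rcases List.mem_append.mp hτ with hτa | hτb <;> rcases List.mem_append.mp hτ' with hτ'a | hτ'b
    · exact hqc τ (List.mem_of_mem_drop hτa) τ' (List.mem_of_mem_drop hτ'a) hrev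
    · exact hdisj (hmem hτ'b hrev.symm) hτa
    · exact hdisj (hmem hτb hrev) hτ'a
    · exact hqc τ (List.mem_of_mem_take (hmem hτ'b hrev.symm))
        τ' (List.mem_of_mem_take (hmem hτb hrev)) hrev
  · have hV : mApply (q.drop i) (mApply (q.take i) P) = mApply q P := by
      rw [← mApply_append, List.take_append_drop]
    rw [stepwiseEff_append, hV]
    exact ⟨(stepwiseEff_take_drop hqSE i).2, (stepwiseEff_take_drop hp i).1⟩
  · rw [List.nodup_append]
    refine ⟨hqnd.sublist (List.drop_sublist _ _),
      (List.rel_nodup IsReverse.biUnique hcb).mp (hqnd.sublist (List.take_sublist _ _)), ?_⟩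
    rintro τ hτa _ hτb rfl
    obtain ⟨σ, hσ, hστ⟩ := hcb.exists_mem_left hτb
    exact hqc σ (List.mem_of_mem_take hσ) τ (List.mem_of_mem_drop hτa) hστ

end Medium

/-- If in an orderly return of length `2n` all opposite tokens are mutual reverses,
then the return is regular. -/
theorem stmt10 {T : Set (S → S)} (hM : IsMedium T) (P : S)
    (m : List (S → S)) (n : ℕ) (hlen : m.length = 2 * n)
    (hor : OrderlyReturn T m P)
    (hopp : ∀ i (hi : i < n),
      IsReverse (m.get ⟨i, by omega⟩) (m.get ⟨i + n, by omega⟩) ∧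
      IsReverse (m.get ⟨i + n, by omega⟩) (m.get ⟨i, by omega⟩)) :
    ∀ i < n, Concise T ((m.drop i).take n) (mApply (m.take i) P) := by
  obtain ⟨q, nr, rfl, hq, hq_rev, hnr, hnr_len⟩ := hM.exists_of_orderlyReturn hor
  rw [List.length_append] at hlen
  have hq_len : q.length = n := by omega
  have hqnr : List.Forall₂ IsReverse q nr :=
    List.forall₂_of_getElem_append_add hq_len (by omega) fun i hi => (hopp i hi).1
  have hnrT : IsMsg T nr := fun τ' hτ' => by
    obtain ⟨τ, hτ, hττ'⟩ := hqnr.exists_mem_left hτ'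
    exact hq_rev τ hτ τ' hττ'
  intro i hi
  rw [← hq_len, List.take_drop_append_of_le_length nr (by omega),
    List.take_append_of_le_length (by omega)]
  exact hq.drop_append_take hnrT hnr hqnr i
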